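/- arXiv:0704.0685 — 6 statements merged into one kernel-verified Lean document; each statement's English description precedes it below -/
import Mathlib

section
/- For all s, n ∈ ℕ, T^s_n(X) = Σ_{m ≤ n, n−m even} (−1)^{(n−m)/2} · ( C((n+m)/2, (n−m)/2) · s^m − C((n+m)/2 − 1, (n−m)/2) · s^{m−1} ) · X^m, where C denotes the binomial coefficient (with the convention that the second term vanishes when m = 0 appropriately, interpreted via s^{m-1} with m ≥ 1; for m = 0 the coefficient is (−1)^{n/2}(C(n/2, n/2)·1 − 0)). -/
/-!
With `S n` the rescaled Chebyshev polynomials of the second kind (`S (n + 2) = X * S (n + 1) - S n`),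
`T^s_{n+1}(X) = S_{n+1}(sX) - X * S_n(sX)`: both sides satisfy the recurrence of `T^s` and agree for
`n = 0, 1`. The coefficient of `X^m` in `S_{m+2j}` is `(-1)^j C(m+j, j)` by the recurrence and
Pascal's rule, and that in `S_{m+2j+1}` vanishes; comparing coefficients gives the formula.
-/

open Polynomial Finset

/-- Generalized Chebyshev polynomials over ℤ. -/
noncomputable def genCheb (s : ℕ) : ℕ → Polynomial ℤ
  | 0 => 1
  | 1 => Polynomial.C ((s : ℤ) - 1) * Polynomial.X
  | (k + 2) => Polynomial.C (s : ℤ) * Polynomial.X * genCheb s (k + 1) - genCheb s k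

namespace Polynomial.Chebyshev

theorem coeff_S_natCast {R : Type*} [CommRing R] (n m : ℕ) :
    (S R n).coeff m =
      if m ≤ n ∧ Even (n - m) then (-1 : R) ^ ((n - m) / 2) * ((n + m) / 2).choose ((n - m) / 2)
      else 0 := by
  induction n using Nat.twoStepInduction generalizing m with
  | zero => rcases m with _ | m <;> simp [coeff_one]
  | one => rcases m with _ | _ | m <;> simp [coeff_X]
  | more n ih ih' =>
    have hS : S R ↑(n + 2) = X * S R ↑(n + 1) - S R n := by
      push_cast; exact S_add_two R n
    simp only [Nat.even_iff] at ih ih' ⊢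
    rcases m with _ | m
    · have h2 : (n + 2) / 2 = n / 2 + 1 := by omega
      rw [hS, coeff_sub, coeff_X_mul_zero, ih, h2]
      split_ifs <;> first | omega | simp [pow_succ]
    · rw [hS, coeff_sub, coeff_X_mul, ih', ih]
      by_cases h : m ≤ n + 1 ∧ (n + 1 - m) % 2 = 0
      · obtain ⟨j, hj⟩ : ∃ j, n + 1 = m + 2 * j := ⟨(n + 1 - m) / 2, by omega⟩
        rcases j with _ | j
        · obtain rfl : m = n + 1 := by omega
          split_ifs <;> first | omega | simp
        · obtain rfl : n = m + 2 * j + 1 := by omega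
          split_ifs <;> try omega
          rw [show m + 2 * j + 1 + 1 - m = 2 * (j + 1) by omega,
            show m + 2 * j + 1 - (m + 1) = 2 * j by omega,
            show m + 2 * j + 1 + 2 - (m + 1) = 2 * (j + 1) by omega,
            show m + 2 * j + 1 + 2 + (m + 1) = 2 * (m + j + 2) by omega,
            show m + 2 * j + 1 + 1 + m = 2 * (m + j + 1) by omega,
            show m + 2 * j + 1 + (m + 1) = 2 * (m + j + 1) by omega]
          simp only [Nat.mul_div_cancel_left _ two_pos, Nat.choose_succ_succ' (m + j + 1) j]
          push_cast
          ring
      · rw [if_neg h, if_neg (by omega), if_neg (by omega), sub_zero]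

end Polynomial.Chebyshev

theorem genCheb_succ_eq_S_comp (s n : ℕ) :
    genCheb s (n + 1) =
      (Chebyshev.S ℤ ↑(n + 1)).comp (C (s : ℤ) * X) -
        X * (Chebyshev.S ℤ n).comp (C (s : ℤ) * X) := by
  induction n using Nat.twoStepInduction with
  | zero => simp [genCheb, sub_mul]
  | one => simp [genCheb, Chebyshev.S_two]; ring
  | more n ih ih' =>
    have hS (k : ℕ) :
        Chebyshev.S ℤ ↑(k + 1 + 1) = X * Chebyshev.S ℤ ↑(k + 1) - Chebyshev.S ℤ k := by
      push_cast; exact Chebyshev.S_add_two ℤ k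
    rw [genCheb, ih, ih', hS (n + 1), hS n]
    simp only [sub_comp, mul_comp, X_comp]
    ring

theorem coeff_genCheb (s n m : ℕ) :
    (genCheb s n).coeff m =
      if m ≤ n ∧ Even (n - m) then
        (-1 : ℤ) ^ ((n - m) / 2) *
          (((n + m) / 2).choose ((n - m) / 2) * (s : ℤ) ^ m -
            if m = 0 then 0 else ((n + m) / 2 - 1).choose ((n - m) / 2) * (s : ℤ) ^ (m - 1))
      else 0 := by
  rcases n with _ | n
  · rcases m with _ | m <;> simp [genCheb, coeff_one]
  rw [genCheb_succ_eq_S_comp, coeff_sub]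
  rcases m with _ | m
  · rw [coeff_X_mul_zero, comp_C_mul_X_coeff, Chebyshev.coeff_S_natCast]
    simp
  rw [coeff_X_mul, comp_C_mul_X_coeff, comp_C_mul_X_coeff, Chebyshev.coeff_S_natCast,
    Chebyshev.coeff_S_natCast, Nat.add_sub_add_right, show (n + 1 + (m + 1)) / 2 - 1 = (n + m) / 2 by omega]
  simp only [if_neg (Nat.add_one_ne_zero m), Nat.add_sub_cancel, Nat.add_le_add_iff_right]
  split_ifs
  · ring
  · simp

theorem natDegree_genCheb_le (s n : ℕ) : (genCheb s n).natDegree ≤ n :=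
  natDegree_le_iff_coeff_eq_zero.2 fun m hm => by rw [coeff_genCheb, if_neg (by omega)]

/-- Explicit expansion of the generalized Chebyshev polynomials:
`T^s_n(X) = Σ_{m ≤ n, n−m even} (−1)^{(n−m)/2} ( C((n+m)/2,(n−m)/2) s^m −
C((n+m)/2−1,(n−m)/2) s^{m−1} ) X^m`, where the second term vanishes when `m = 0`. -/
theorem genCheb_eq_sum (s n : ℕ) :
    genCheb s n =
      ∑ m ∈ Finset.range (n + 1),
        if Even (n - m) then
          Polynomial.C ((-1 : ℤ) ^ ((n - m) / 2) *
            ((((n + m) / 2).choose ((n - m) / 2) : ℤ) * (s : ℤ) ^ m -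
              (if m = 0 then 0 else
                ((((n + m) / 2 - 1).choose ((n - m) / 2) : ℤ) * (s : ℤ) ^ (m - 1))))) *
            Polynomial.X ^ m
        else 0 := by
  rw [as_sum_range_C_mul_X_pow' (genCheb s n) (Nat.lt_succ_of_le (natDegree_genCheb_le s n))]
  refine sum_congr rfl fun m hm => ?_
  simp only [coeff_genCheb, Nat.lt_succ_iff.1 (mem_range.1 hm), true_and]
  split_ifs <;> simp
end

section
/- Fix s ≥ 1 and let P_s = {a_1, …, a_s, c} with a_i < c for all i, and let P_s^* be the set of finite words over P_s with the generalized subword order. If p_1⋯p_l is a word containing exactly k letters equal to c and l−k letters from {a_1,…,a_s}, then the interval [p_1⋯p_l, c^l] in P_s^* is isomorphic to the Boolean lattice B_{l−k} of rank l−k. -/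
/-- The alphabet `P_s = {a_1, …, a_s, c}` with `a_i < c`: `some i` is `a_i`, `none` is `c`. -/
abbrev Letter (s : ℕ) := Option (Fin s)

/-- The generalized subword order: `u ≤ w` iff some subword of `w` dominates `u`
letterwise, where `x ≤ y` in `P_s` iff `x = y` or `y = c`. -/
def WLE {s : ℕ} (u w : List (Letter s)) : Prop :=
  ∃ w', w'.Sublist w ∧ List.Forall₂ (fun x y => x = y ∨ y = none) u w'

lemma wle_replicate_iff {s : ℕ} {v : List (Letter s)} {l : ℕ} :
    WLE v (List.replicate l (none : Letter s)) ↔ v.length ≤ l := by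
  constructor
  · rintro ⟨w', hw', hf⟩
    calc v.length = w'.length := hf.length_eq
    _ ≤ l := by simpa using hw'.length_le
  · intro h
    refine ⟨List.replicate v.length none, ?_, ?_⟩
    · exact (List.replicate_sublist_replicate _).mpr h
    · rw [List.forall₂_iff_get]
      refine ⟨by simp, fun i h₁ h₂ => Or.inr ?_⟩
      simp

lemma wle_iff_forall₂ {s : ℕ} {u v : List (Letter s)} (h : u.length = v.length) :
    WLE u v ↔ List.Forall₂ (fun x y => x = y ∨ y = none) u v := by
  constructor
  · rintro ⟨w', hsub, hf⟩
    have hw : w' = v := hsub.eq_of_length (by rw [← hf.length_eq, h])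
    exact hw ▸ hf
  · intro hf
    exact ⟨v, List.Sublist.refl v, hf⟩

lemma count_eq_card_filter {β : Type*} [DecidableEq β] (a : Option β) (w : List (Option β)) :
    (Finset.univ.filter fun i : Fin w.length => w.get i = a).card = w.count a := by
  induction w with
  | nil => simp
  | cons b t ih =>
    rw [Finset.card_filter]
    simp only [List.length_cons]
    rw [Fin.sum_univ_succ]
    simp only [List.get_eq_getElem, List.getElem_cons_succ, List.getElem_cons_zero, Fin.val_succ,
      Fin.val_zero]
    rw [← Finset.card_filter]
    simp only [List.get_eq_getElem] at ih
    rw [ih, List.count_cons]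
    rcases eq_or_ne b a with hb | hb <;> simp [hb] <;> omega

lemma mem_interval_iff {s : ℕ} {w v : List (Letter s)} :
    (WLE w v ∧ WLE v (List.replicate w.length (none : Letter s))) ↔
      List.Forall₂ (fun x y => x = y ∨ y = none) w v := by
  constructor
  · rintro ⟨⟨w', hsub, hf⟩, h2⟩
    have h2' : v.length ≤ w.length := wle_replicate_iff.mp h2
    have hw'len : w'.length = w.length := hf.length_eq.symm
    have hle := hsub.length_le
    have hvlen : v.length = w.length := by omega
    have hw : w' = v := hsub.eq_of_length (by omega)
    exact hw ▸ hf
  · intro hf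
    exact ⟨⟨v, List.Sublist.refl v, hf⟩,
      wle_replicate_iff.mpr (le_of_eq hf.length_eq.symm)⟩

/-- Forall₂ along the domination relation, rephrased via `getD`. -/
lemma forall₂_getD {s : ℕ} {w v : List (Letter s)} (hf : List.Forall₂ (fun x y => x = y ∨ y = none) w v)
    {i : ℕ} (hi : i < w.length) :
    w.get ⟨i, hi⟩ = v.getD i none ∨ v.getD i none = none := by
  have hlen : w.length = v.length := hf.length_eq
  have hi' : i < v.length := hlen ▸ hi
  have := (List.forall₂_iff_get.mp hf).2 i hi hi'
  rw [List.getD_eq_getElem v none hi']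
  simpa [List.get_eq_getElem] using this

/-- Forall₂ along the domination relation, with `getD` on both sides. -/
lemma forall₂_getD' {s : ℕ} {u v : List (Letter s)}
    (hf : List.Forall₂ (fun x y => x = y ∨ y = none) u v) {i : ℕ} (hi : i < u.length) :
    u.getD i none = v.getD i none ∨ v.getD i none = none := by
  have hlen : u.length = v.length := hf.length_eq
  have hi' : i < v.length := hlen ▸ hi
  have := (List.forall₂_iff_get.mp hf).2 i hi hi'
  rw [List.getD_eq_getElem u none hi, List.getD_eq_getElem v none hi']
  simpa [List.get_eq_getElem] using this

/-- If a word `w` of length `l` has exactly `k` letters equal to `c`, then the interval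
`[w, c^l]` in the generalized subword order is isomorphic to the Boolean lattice of
rank `l − k`. -/
theorem interval_boolean (s : ℕ) (hs : 1 ≤ s) (l k : ℕ) (hk : k ≤ l)
    (w : List (Letter s)) (hlen : w.length = l) (hc : w.count (none : Letter s) = k) :
    ∃ f : {v : List (Letter s) // WLE w v ∧ WLE v (List.replicate l (none : Letter s))}
        ≃ Finset (Fin (l - k)),
      ∀ u v, WLE u.1 v.1 ↔ f u ⊆ f v := by
  subst hlen hc
  -- cardinality of the set of non-`c` positions
  have hcard : Fintype.card {i : Fin w.length // w.get i ≠ none} =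
      w.length - w.count (none : Letter s) := by
    rw [Fintype.card_subtype]
    have h2 := count_eq_card_filter (none : Letter s) w
    simp only [ne_eq]
    rw [Finset.filter_not, Finset.card_sdiff_of_subset (Finset.filter_subset _ _), Finset.card_univ,
      Fintype.card_fin, h2]
  have e0 : {i : Fin w.length // w.get i ≠ none} ≃
      Fin (w.length - w.count (none : Letter s)) := Fintype.equivFinOfCardEq hcard
  have hmem : ∀ v : {v : List (Letter s) //
        WLE w v ∧ WLE v (List.replicate w.length (none : Letter s))},
      List.Forall₂ (fun x y => x = y ∨ y = none) w v.1 := fun v => mem_interval_iff.mp v.2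
  have hvlen : ∀ v : {v : List (Letter s) //
        WLE w v ∧ WLE v (List.replicate w.length (none : Letter s))},
      v.1.length = w.length := fun v => (hmem v).length_eq.symm
  -- the map to finsets: record at which non-`c` positions the letter was raised to `c`
  let g : {v : List (Letter s) //
        WLE w v ∧ WLE v (List.replicate w.length (none : Letter s))} →
      Finset {i : Fin w.length // w.get i ≠ none} := fun v =>
    Finset.univ.filter fun i => v.1.getD i.1.1 none = none
  have hmemg : ∀ v (i : {i : Fin w.length // w.get i ≠ none}),
      i ∈ g v ↔ v.1.getD i.1.1 none = none := by
    intro v i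
    simp [g]
  -- a word in the interval is determined by its `getD` values below `w.length`
  have hext : ∀ u v : {v : List (Letter s) //
        WLE w v ∧ WLE v (List.replicate w.length (none : Letter s))}, (∀ i, i < w.length → u.1.getD i none = v.1.getD i none) → u = v := by
    intro u v h
    ext1
    apply List.ext_get (by rw [hvlen u, hvlen v])
    intro i h₁ h₂
    have hiw : i < w.length := by rw [hvlen u] at h₁; exact h₁
    have e1 := List.getD_eq_getElem u.1 none h₁
    have e2 := List.getD_eq_getElem v.1 none h₂
    simp only [List.get_eq_getElem]
    rw [← e1, ← e2]
    exact h i hiw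
  -- order correspondence
  have horder : ∀ u v, WLE u.1 v.1 ↔ g u ⊆ g v := by
    intro u v
    rw [wle_iff_forall₂ (by rw [hvlen u, hvlen v])]
    constructor
    · intro hf i hiu
      rw [hmemg] at hiu ⊢
      have hi : (i.1.1 : ℕ) < u.1.length := by rw [hvlen u]; exact i.1.2
      rcases forall₂_getD' hf hi with h' | h'
      · rw [← h']; exact hiu
      · exact h'
    · intro hsub
      rw [List.forall₂_iff_get]
      refine ⟨by rw [hvlen u, hvlen v], fun i h₁ h₂ => ?_⟩
      have hiw : i < w.length := by rw [hvlen u] at h₁; exact h₁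
      have e1 := List.getD_eq_getElem u.1 none h₁
      have e2 := List.getD_eq_getElem v.1 none h₂
      simp only [List.get_eq_getElem]
      rw [← e1, ← e2]
      rcases eq_or_ne (w.get ⟨i, hiw⟩) none with hwn | hwn
      · -- a `c` position of `w`: both letters are `c`
        have hu := forall₂_getD (hmem u) hiw
        have hv := forall₂_getD (hmem v) hiw
        rw [hwn] at hu hv
        have hu' : u.1.getD i none = none := by rcases hu with h | h; exacts [h.symm, h]
        have hv' : v.1.getD i none = none := by rcases hv with h | h; exacts [h.symm, h]
        left; rw [hu', hv']
      · rcases eq_or_ne (u.1.getD i none) none with hun | hun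
        · have hju : (⟨⟨i, hiw⟩, hwn⟩ : {i : Fin w.length // w.get i ≠ none}) ∈ g u := by
            rw [hmemg]; exact hun
          have hjv := hsub hju
          rw [hmemg] at hjv
          right; exact hjv
        · have hu := (forall₂_getD (hmem u) hiw).resolve_right hun
          rcases forall₂_getD (hmem v) hiw with hv | hv
          · left; rw [← hu, ← hv]
          · right; exact hv
  -- injectivity
  have hinj : Function.Injective g := by
    intro u v huv
    apply hext
    intro i hiw
    rcases eq_or_ne (w.get ⟨i, hiw⟩) none with hwn | hwn
    · have hu := forall₂_getD (hmem u) hiw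
      have hv := forall₂_getD (hmem v) hiw
      rw [hwn] at hu hv
      have hu' : u.1.getD i none = none := by rcases hu with h | h; exacts [h.symm, h]
      have hv' : v.1.getD i none = none := by rcases hv with h | h; exacts [h.symm, h]
      rw [hu', hv']
    · have hiff : ((⟨⟨i, hiw⟩, hwn⟩ : {i : Fin w.length // w.get i ≠ none}) ∈ g u)
          ↔ ((⟨⟨i, hiw⟩, hwn⟩ : {i : Fin w.length // w.get i ≠ none}) ∈ g v) := by rw [huv]
      rw [hmemg, hmemg] at hiff
      rcases eq_or_ne (u.1.getD i none) none with hun | hun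
      · rw [hun, hiff.mp hun]
      · have hvn : v.1.getD i none ≠ none := fun h => hun (hiff.mpr h)
        have hu := (forall₂_getD (hmem u) hiw).resolve_right hun
        have hv := (forall₂_getD (hmem v) hiw).resolve_right hvn
        rw [← hu, ← hv]
  -- surjectivity
  have hsurj : Function.Surjective g := by
    intro S
    obtain ⟨vl, hvl⟩ : ∃ vl : List (Letter s), vl = List.ofFn (fun i : Fin w.length =>
        if h : w.get i = none then none else
          if (⟨i, h⟩ : {i : Fin w.length // w.get i ≠ none}) ∈ S then none else w.get i) :=
      ⟨_, rfl⟩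
    have hlenvl : vl.length = w.length := by rw [hvl, List.length_ofFn]
    have hgetvl : ∀ (i : ℕ) (hi : i < w.length),
        vl.getD i none =
          if h : w.get ⟨i, hi⟩ = none then none else
            if (⟨⟨i, hi⟩, h⟩ : {i : Fin w.length // w.get i ≠ none}) ∈ S then none
            else w.get ⟨i, hi⟩ := by
      intro i hi
      rw [hvl, List.getD_eq_getElem _ none (by simpa using hi)]
      simp [List.getElem_ofFn]
    have hf : List.Forall₂ (fun x y : Letter s => x = y ∨ y = none) w vl := by
      rw [List.forall₂_iff_get]
      refine ⟨hlenvl.symm, fun i h₁ h₂ => ?_⟩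
      have e2 := List.getD_eq_getElem vl none h₂
      simp only [List.get_eq_getElem]
      rw [← e2, hgetvl i h₁]
      rcases eq_or_ne (w.get ⟨i, h₁⟩) none with hwn | hwn
      · rw [dif_pos hwn]
        left
        simpa [List.get_eq_getElem] using hwn
      · rw [dif_neg hwn]
        by_cases hS : (⟨⟨i, h₁⟩, hwn⟩ : {i : Fin w.length // w.get i ≠ none}) ∈ S
        · right; rw [if_pos hS]
        · left; rw [if_neg hS]; simp [List.get_eq_getElem]
    refine ⟨⟨vl, mem_interval_iff.mpr hf⟩, ?_⟩
    ext j
    rw [hmemg]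
    rw [hgetvl j.1.1 j.1.2]
    simp only [Fin.eta, Subtype.coe_eta]
    rw [dif_neg j.2]
    constructor
    · intro h
      by_contra hS
      rw [if_neg hS] at h
      exact j.2 h
    · intro hS
      rw [if_pos hS]
  -- assemble the equivalence
  refine ⟨(Equiv.ofBijective g ⟨hinj, hsurj⟩).trans (Equiv.finsetCongr e0), ?_⟩
  intro u v
  rw [horder u v]
  simp only [Equiv.trans_apply, Equiv.finsetCongr_apply, Equiv.ofBijective_apply]
  exact (Finset.map_subset_map).symm
end

section
/- Fix s ≥ 1 and P_s = {a_1,…,a_s, c | a_i < c}. For 1 ≤ α ≤ β, let M((α,0),(β,i)) be the number of words of length β with exactly i letters c and β−i letters from {a_1,…,a_s} that are ≥ a_1^α in the generalized subword order. Then Σ_{i=0}^{β} M((α,0),(β,i)) · (−1)^i = 0. -/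
/-!
A word lies above `a^α` exactly when at least `α` of its letters lie in `{a, c}`. Exchanging
`a ↔ c` at the first such letter preserves the length and that count but changes the number
of `c`s by one. Since `α ≥ 1`, every word above `a^α` has such a letter, so this is a
fixed-point-free sign-reversing involution and the signed count vanishes.
-/

namespace List

theorem forall₂_replicate_left_iff {α β : Type*} {R : α → β → Prop} {a : α} {n : ℕ}
    {l : List β} : Forall₂ R (replicate n a) l ↔ l.length = n ∧ ∀ b ∈ l, R a b := by
  induction n generalizing l with
  | zero => simp +contextual
  | succ n ih => cases l <;> simp [replicate_succ, ih, and_left_comm]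

theorem le_countP_iff_exists_sublist {α : Type*} {p : α → Bool} {l : List α} {n : ℕ} :
    n ≤ l.countP p ↔ ∃ l', l' <+ l ∧ l'.length = n ∧ ∀ x ∈ l', p x := by
  constructor
  · intro h
    refine ⟨(l.filter p).take n, (take_sublist _ _).trans (filter_sublist), ?_, ?_⟩
    · rw [length_take, ← countP_eq_length_filter]
      omega
    · exact fun x hx => (mem_filter.1 (mem_of_mem_take hx)).2
  · rintro ⟨l', hsub, rfl, hp⟩
    exact (countP_eq_length.2 hp).ge.trans hsub.countP_le

section SwapFirst

variable {α : Type*} [BEq α] (a c : α)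

def swapFirst : List α → List α
  | [] => []
  | x :: l => if x == a then c :: l else if x == c then a :: l else x :: swapFirst l

variable {a c}

@[simp]
theorem length_swapFirst (l : List α) : (swapFirst a c l).length = l.length := by
  induction l with
  | nil => rfl
  | cons x l ih => simp only [swapFirst]; split_ifs <;> simp [ih]

variable [LawfulBEq α]

theorem swapFirst_swapFirst (l : List α) : swapFirst a c (swapFirst a c l) = l := by
  induction l with
  | nil => rfl
  | cons x l ih =>
    simp only [swapFirst]
    split_ifs <;> simp_all [swapFirst]

theorem countP_swapFirst (l : List α) :
    (swapFirst a c l).countP (fun y => y == a || y == c) =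
      l.countP (fun y => y == a || y == c) := by
  induction l with
  | nil => rfl
  | cons x l ih =>
    simp only [swapFirst]
    split_ifs <;> simp_all

theorem neg_one_pow_count_swapFirst {R : Type*} [Ring R] (hac : a ≠ c) {l : List α}
    (hl : a ∈ l ∨ c ∈ l) : (-1 : R) ^ (swapFirst a c l).count c = -(-1) ^ l.count c := by
  induction l with
  | nil => simp at hl
  | cons x l ih =>
    simp only [swapFirst]
    split_ifs with hxa hxc
    · obtain rfl := eq_of_beq hxa
      simp [hac, pow_succ]
    · obtain rfl := eq_of_beq hxc
      simp [hac, pow_succ]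
    · have hl' : a ∈ l ∨ c ∈ l := by grind
      simp [count_cons, hxc, ih hl']

theorem sum_neg_one_pow_count_eq_zero (hac : a ≠ c) (A : Finset (List α))
    (hA : ∀ l ∈ A, swapFirst a c l ∈ A) (hmem : ∀ l ∈ A, a ∈ l ∨ c ∈ l) :
    ∑ l ∈ A, (-1 : ℤ) ^ l.count c = 0 := by
  refine Finset.sum_involution (fun l _ => swapFirst a c l) (fun l hl => ?_)
    (fun l hl _ hfix => ?_) hA (fun l _ => swapFirst_swapFirst l)
  · rw [neg_one_pow_count_swapFirst hac (hmem l hl), add_neg_cancel]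
  · have hsign := neg_one_pow_count_swapFirst (R := ℤ) hac (hmem l hl)
    rw [hfix, eq_neg_iff_add_eq_zero, ← two_mul] at hsign
    simp at hsign

end SwapFirst

end List

open Finset

theorem Finset.sum_mul_card_filter_eq_sum_comp {ι R : Type*} [CommSemiring R] {A : Finset ι}
    {t : Finset ℕ} {f : ι → ℕ} (hf : ∀ x ∈ A, f x ∈ t) (g : ℕ → R) :
    ∑ i ∈ t, g i * #{x ∈ A | f x = i} = ∑ x ∈ A, g (f x) := by
  rw [← sum_fiberwise_of_maps_to hf]
  refine sum_congr rfl fun i _ => ?_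
  rw [sum_congr rfl fun x hx => by rw [(mem_filter.1 hx).2], sum_const,
    nsmul_eq_mul, mul_comm]

theorem wle_replicate_iff_s10 {s : ℕ} (a : Fin s) (n : ℕ) (w : List (Letter s)) :
    WLE (List.replicate n (some a)) w ↔ n ≤ w.countP (fun y => y == some a || y == none) := by
  simp only [WLE, List.forall₂_replicate_left_iff, List.le_countP_iff_exists_sublist,
    eq_comm (a := some a), Bool.or_eq_true, beq_iff_eq]

theorem alt_sum_above_a_pow_general (s : ℕ) (hs : 1 ≤ s) (α β : ℕ) (hα : 1 ≤ α) :
    ∑ i ∈ Finset.range (β + 1), (-1 : ℤ) ^ i *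
      ({w : List (Letter s) | w.length = β ∧ w.count (none : Letter s) = i ∧
        WLE (List.replicate α (some (⟨0, hs⟩ : Fin s)) : List (Letter s)) w}.ncard : ℤ)
      = 0 := by
  set a : Fin s := ⟨0, hs⟩
  set A : Finset (List (Letter s)) := {w ∈ (List.finite_length_eq (Letter s) β).toFinset |
    α ≤ w.countP (fun y => y == some a || y == none)} with hA
  have mem_A (w : List (Letter s)) :
      w ∈ A ↔ w.length = β ∧ α ≤ w.countP (fun y => y == some a || y == none) := by
    simp [hA]
  have hfiber (i : ℕ) : {w : List (Letter s) | w.length = β ∧ w.count none = i ∧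
      WLE (List.replicate α (some a)) w}.ncard = #{w ∈ A | w.count none = i} := by
    rw [← Set.ncard_coe_finset]
    congr 1
    ext w
    simp only [Set.mem_ofPred_eq, coe_filter, mem_A, wle_replicate_iff_s10]
    tauto
  have hcount_mem : ∀ w ∈ A, w.count none ∈ range (β + 1) := fun w hw => by
    rw [mem_range, Nat.lt_succ_iff, ← ((mem_A w).1 hw).1]
    exact List.count_le_length
  have hswap_mem : ∀ w ∈ A, List.swapFirst (some a) none w ∈ A := fun w hw => by
    rw [mem_A, List.length_swapFirst, List.countP_swapFirst]
    exact (mem_A w).1 hw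
  have hletter : ∀ w ∈ A, some a ∈ w ∨ none ∈ w := fun w hw => by
    obtain ⟨y, hy, hpy⟩ := List.countP_pos_iff.1 (hα.trans ((mem_A w).1 hw).2)
    simp only [Bool.or_eq_true, beq_iff_eq] at hpy
    rcases hpy with rfl | rfl <;> simp [hy]
  simp only [hfiber]
  rw [sum_mul_card_filter_eq_sum_comp hcount_mem (fun i => (-1 : ℤ) ^ i)]
  exact List.sum_neg_one_pow_count_eq_zero (Option.some_ne_none a) A hswap_mem hletter

/-- For `1 ≤ α ≤ β`, the alternating sum over `i` of the number of words of length `β`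
with exactly `i` letters `c` lying above `a_1^α` is zero. -/
theorem alt_sum_above_a_pow (s : ℕ) (hs : 1 ≤ s) (α β : ℕ) (hα : 1 ≤ α) (hαβ : α ≤ β) :
    ∑ i ∈ Finset.range (β + 1), (-1 : ℤ) ^ i *
      ({w : List (Letter s) | w.length = β ∧ w.count (none : Letter s) = i ∧
        WLE (List.replicate α (some (⟨0, hs⟩ : Fin s)) : List (Letter s)) w}.ncard : ℤ)
      = 0 :=
  alt_sum_above_a_pow_general s hs α β hα
end

section
/- Fix s ≥ 1 and P_s = {a_1,…,a_s, c | a_i < c}, and let M((m,p),(n,q)) denote the number of words in {a^{n−q}c^q} (words of length n with q letters c and n−q letters among the a_i) that lie above a_1^{m−p}c^p in the generalized subword order. Then for 1 ≤ p ≤ m ≤ n and p ≤ q ≤ n: M((m,p),(n,q)) = Σ_{i=0}^{n−m} M((m−1,p−1),(n−1−i,q−1)) · s^i. -/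
/-- `M((m,p),(n,q))`: the number of words of length `n` with exactly `q` letters `c`
lying above `a_1^{m−p} c^p` in the generalized subword order. -/
noncomputable def M (s : ℕ) (hs : 1 ≤ s) (m p n q : ℕ) : ℕ :=
  {w : List (Letter s) | w.length = n ∧ w.count (none : Letter s) = q ∧
    WLE (List.replicate (m - p) (some (⟨0, hs⟩ : Fin s)) ++
      List.replicate p (none : Letter s)) w}.ncard

open List

namespace List

variable {α : Type*} {a : α}

theorem exists_eq_append_cons_notMem_of_mem {l : List α} (h : a ∈ l) :
    ∃ x z, l = x ++ a :: z ∧ a ∉ z := by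
  obtain ⟨z, x, hl, hz⟩ := eq_append_cons_of_mem (mem_reverse.2 h)
  exact ⟨x.reverse, z.reverse, by simpa using congrArg reverse hl, by simpa using hz⟩

theorem append_cons_inj_of_notMem_right {x₁ x₂ z₁ z₂ : List α} (h₁ : a ∉ z₁) (h₂ : a ∉ z₂)
    (h : x₁ ++ a :: z₁ = x₂ ++ a :: z₂) : x₁ = x₂ ∧ z₁ = z₂ := by
  simp only [append_eq_append_iff, cons_eq_append_iff, cons_eq_cons] at h
  rcases h with ⟨c, rfl, h⟩ | ⟨c, rfl, h⟩ <;>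
    rcases h with ⟨rfl, -, rfl⟩ | ⟨d, rfl, rfl⟩ <;> simp_all

theorem sublist_of_cons_sublist_append_cons {l r₁ r₂ : List α} (ha : a ∉ r₁)
    (h : a :: l <+ r₁ ++ a :: r₂) : l <+ r₂ := by
  induction r₁ with
  | nil => exact (cons_sublist_cons.1 h)
  | cons x r₁ ih =>
    rw [mem_cons, not_or] at ha
    rcases sublist_cons_iff.1 h with h | ⟨r, hr, -⟩
    · exact ih ha.2 h
    · exact absurd (cons_eq_cons.1 hr).1 ha.1

theorem sublist_of_append_singleton_sublist_append_cons {l r₁ r₂ : List α} (ha : a ∉ r₂)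
    (h : l ++ [a] <+ r₁ ++ a :: r₂) : l <+ r₁ := by
  have := sublist_of_cons_sublist_append_cons (l := l.reverse) (r₁ := r₂.reverse)
    (r₂ := r₁.reverse) (by simpa using ha) (by simpa using h.reverse)
  simpa using this.reverse

theorem none_notMem_map_some {β : Type*} (v : List β) : (none : Option β) ∉ v.map some := by
  simp

end List

namespace Set

theorem ncard_setOf_length_eq (α : Type*) [Fintype α] (n : ℕ) :
    {l : List α | l.length = n}.ncard = Fintype.card α ^ n :=
  show Nat.card (List.Vector α n) = _ by rw [Nat.card_eq_fintype_card, card_vector]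

theorem ncard_biUnion_prod_setOf_length_eq {α β : Type*} [Fintype β] (t : Finset ℕ)
    (A : ℕ → Set α) (hA : ∀ i ∈ t, (A i).Finite) :
    (⋃ i ∈ t, A i ×ˢ {v : List β | v.length = i}).ncard =
      ∑ i ∈ t, (A i).ncard * Fintype.card β ^ i := by
  rw [← Finset.set_biUnion_coe, (Finset.finite_toSet t).ncard_biUnion, finsum_mem_coe_finset]
  · simp only [Set.ncard_prod, Set.ncard_setOf_length_eq]
  · exact fun i hi => (hA i hi).prod (List.finite_length_eq β i)
  · intro i _ j _ hij
    exact Set.disjoint_prod.2 (Or.inr (Set.disjoint_left.2 fun v hi hj => hij (hi.symm.trans hj)))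

end Set

section

variable {s : ℕ}

theorem WLE.length_le {u w : List (Letter s)} (h : WLE u w) : u.length ≤ w.length := by
  obtain ⟨w₀, hsub, hf⟩ := h
  exact hf.length_eq ▸ hsub.length_le

theorem wle_append_none_iff {u w v : List (Letter s)} (hv : none ∉ v) :
    WLE (u ++ [none]) (w ++ none :: v) ↔ WLE u w := by
  constructor
  · rintro ⟨w₀, hsub, hf⟩
    rw [← forall₂_reverse_iff, reverse_append] at hf
    obtain ⟨y, t, hy, ht, hw₀⟩ := forall₂_cons_left_iff.1 hf
    obtain rfl : y = none := hy.elim Eq.symm id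
    rw [← reverse_reverse w₀, hw₀, reverse_cons] at hsub
    exact ⟨t.reverse, sublist_of_append_singleton_sublist_append_cons hv hsub,
      forall₂_reverse_iff.1 (by simpa using ht)⟩
  · rintro ⟨w₀, hsub, hf⟩
    exact ⟨w₀ ++ [none], hsub.append (singleton_sublist.2 mem_cons_self),
      rel_append hf (.cons (.inl rfl) .nil)⟩

variable (hs : 1 ≤ s)

def pattern (m p : ℕ) : List (Letter s) :=
  replicate (m - p) (some ⟨0, hs⟩) ++ replicate p none

def aboveSet (m p n q : ℕ) : Set (List (Letter s)) :=
  {w | w.length = n ∧ w.count none = q ∧ WLE (pattern hs m p) w}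

theorem M_eq_ncard_aboveSet (m p n q : ℕ) : M s hs m p n q = (aboveSet hs m p n q).ncard := rfl

variable {hs} {m p : ℕ}

theorem length_pattern (hpm : p ≤ m) : (pattern hs m p).length = m := by
  simp only [pattern, length_append, length_replicate]
  omega

theorem pattern_eq_append_none (hp : 1 ≤ p) :
    pattern hs m p = pattern hs (m - 1) (p - 1) ++ [none] := by
  obtain ⟨p, rfl⟩ := Nat.exists_eq_add_of_le' hp
  simp [pattern, replicate_succ', show m - 1 - p = m - (p + 1) by omega]

variable (s) in
def joinWithC (x : List (Letter s) × List (Fin s)) : List (Letter s) :=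
  x.1 ++ none :: x.2.map some

theorem joinWithC_injective : Function.Injective (joinWithC s) := by
  rintro ⟨w₁, v₁⟩ ⟨w₂, v₂⟩ h
  obtain ⟨rfl, hv⟩ := append_cons_inj_of_notMem_right (by simp) (by simp) h
  exact Prod.ext rfl (map_injective_iff.2 (Option.some_injective _) hv)

theorem exists_joinWithC_eq {w : List (Letter s)} (hw : none ∈ w) : ∃ x, joinWithC s x = w := by
  obtain ⟨w', v, rfl, hv⟩ := exists_eq_append_cons_notMem_of_mem hw
  refine ⟨(w', v.reduceOption), ?_⟩
  have hsome : ∀ x ∈ v, x.isSome := fun x hx =>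
    Option.isSome_iff_ne_none.2 (ne_of_mem_of_not_mem hx hv)
  simp [joinWithC, reduceOption, map_filterMap_some_eq_filter_map_isSome, filter_eq_self.2 hsome]

theorem joinWithC_mem_aboveSet_iff (hp : 1 ≤ p) {n q : ℕ} {w : List (Letter s)}
    {v : List (Fin s)} :
    joinWithC s (w, v) ∈ aboveSet hs m p n q ↔
      w.length + (v.length + 1) = n ∧ w.count none + 1 = q ∧
        WLE (pattern hs (m - 1) (p - 1)) w := by
  simp [aboveSet, joinWithC, pattern_eq_append_none hp,
    wle_append_none_iff (none_notMem_map_some v), count_eq_zero.2 (none_notMem_map_some v)]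

theorem aboveSet_finite (m p n q : ℕ) : (aboveSet hs m p n q).Finite :=
  (List.finite_length_eq _ n).subset fun _ hw => hw.1

theorem aboveSet_eq_image_biUnion {n q : ℕ} (hp : 1 ≤ p) (hpm : p ≤ m) (hmn : m ≤ n)
    (hpq : p ≤ q) :
    aboveSet hs m p n q = joinWithC s '' ⋃ i ∈ Finset.range (n - m + 1),
      aboveSet hs (m - 1) (p - 1) (n - 1 - i) (q - 1) ×ˢ {v | v.length = i} := by
  ext w
  simp only [Set.mem_image, Set.mem_iUnion, Set.mem_prod, Set.mem_ofPred_eq, Finset.mem_range,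
    exists_prop, Prod.exists]
  constructor
  · intro hw
    obtain ⟨⟨w', v⟩, rfl⟩ := exists_joinWithC_eq (count_pos_iff.1 (by rw [hw.2.1]; omega))
    obtain ⟨hn, hq, hle⟩ := (joinWithC_mem_aboveSet_iff hp).1 hw
    have := hle.length_le
    rw [length_pattern (by omega)] at this
    exact ⟨w', v, ⟨v.length, by omega, ⟨by omega, by omega, hle⟩, rfl⟩, rfl⟩
  · rintro ⟨w', v, ⟨i, hi, ⟨hn, hq, hle⟩, rfl⟩, rfl⟩
    have := hle.length_le
    rw [length_pattern (by omega)] at this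
    exact (joinWithC_mem_aboveSet_iff hp).2 ⟨by omega, by omega, hle⟩

end

theorem M_recurrence_general (s : ℕ) (hs : 1 ≤ s) (m p n q : ℕ)
    (hp : 1 ≤ p) (hpm : p ≤ m) (hmn : m ≤ n) (hpq : p ≤ q) :
    M s hs m p n q = ∑ i ∈ Finset.range (n - m + 1), M s hs (m - 1) (p - 1) (n - 1 - i) (q - 1) * s ^ i := by
  simp only [M_eq_ncard_aboveSet]
  rw [aboveSet_eq_image_biUnion hp hpm hmn hpq, Set.ncard_image_of_injective _ joinWithC_injective,
    Set.ncard_biUnion_prod_setOf_length_eq _ _ fun i _ => aboveSet_finite _ _ _ _, Fintype.card_fin]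

/-- For `1 ≤ p ≤ m ≤ n` and `p ≤ q ≤ n`:
`M((m,p),(n,q)) = Σ_{i=0}^{n−m} M((m−1,p−1),(n−1−i,q−1)) · s^i`. -/
theorem M_recurrence (s : ℕ) (hs : 1 ≤ s) (m p n q : ℕ)
    (hp : 1 ≤ p) (hpm : p ≤ m) (hmn : m ≤ n) (hpq : p ≤ q) (hqn : q ≤ n) :
    M s hs m p n q = ∑ i ∈ Finset.range (n - m + 1), M s hs (m - 1) (p - 1) (n - 1 - i) (q - 1) * s ^ i :=
  M_recurrence_general s hs m p n q hp hpm hmn hpq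
end

section
/- Fix s ≥ 1, P_s = {a_1,…,a_s, c | a_i < c}. For 0 ≤ p ≤ m, 0 ≤ q ≤ n, the number of words of length n with exactly q letters c and n−q letters from {a_1,…,a_s} lying above a fixed word p_1⋯p_m (having exactly p letters c) in the generalized subword order depends only on (m, p, n, q), not on the choice of the word p_1⋯p_m. -/
/-!
Mark each letter `c` by a variable `Y` and let `F_u = ∑ₙ Xⁿ ∑ Y^{#c(w)}`, the inner sum over the
words `w` of length `n` above `u`. Reading `w` from the left and matching greedily, its first letter
is either matched to the first letter `x` of `u` or skipped, so
`(1 - X N_x) F_{x u} = X M_x F_u`, where `M_x` (resp. `N_x`) is the total weight of the letters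
that are (resp. are not) above `x`. Hence `F_u ∏ᵢ (1 - X N_{uᵢ}) = ∏ᵢ X M_{uᵢ} F_[]`, and the
factors `1 - X N` are units. The pair `(M_x, N_x)` is `(Y, s)` for `x = c` and `(Y + 1, s - 1)`
for every `a_i`, so `F_u` depends only on the length of `u` and its number of letters `c`.
-/

open PowerSeries

namespace List

variable {α β : Type*} {R : α → β → Prop}

theorem sublistForall₂_nil_right_iff {l : List α} : SublistForall₂ R l [] ↔ l = [] := by
  refine ⟨fun h => ?_, fun h => h ▸ .nil⟩
  cases h
  rfl

theorem SublistForall₂.of_cons {a : α} {l₁ : List α} {l₂ : List β}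
    (h : SublistForall₂ R (a :: l₁) l₂) : SublistForall₂ R l₁ l₂ := by
  induction l₂ with
  | nil => cases h
  | cons b l₂ ih =>
    cases h with
    | cons _ h => exact h.cons_right
    | cons_right h => exact (ih h).cons_right

theorem sublistForall₂_cons_cons_iff_of_rel {a : α} {b : β} {l₁ : List α} {l₂ : List β}
    (hab : R a b) : SublistForall₂ R (a :: l₁) (b :: l₂) ↔ SublistForall₂ R l₁ l₂ := by
  refine ⟨fun h => ?_, fun h => h.cons hab⟩
  cases h with
  | cons _ h => exact h
  | cons_right h => exact h.of_cons

theorem sublistForall₂_cons_cons_iff_of_not_rel {a : α} {b : β} {l₁ : List α} {l₂ : List β}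
    (hab : ¬R a b) : SublistForall₂ R (a :: l₁) (b :: l₂) ↔ SublistForall₂ R (a :: l₁) l₂ := by
  refine ⟨fun h => ?_, fun h => h.cons_right⟩
  cases h with
  | cons h => exact absurd h hab
  | cons_right h => exact h

theorem map_perm_replicate_append_replicate {γ : Type*} [BEq α] [LawfulBEq α] (l : List α)
    (a : α) (f : α → γ) (c : γ) (hf : ∀ x ≠ a, f x = c) :
    l.map f ~ replicate (l.count a) (f a) ++ replicate (l.length - l.count a) c := by
  induction l with
  | nil => simp
  | cons x l ih =>
    have hle := l.count_le_length (a := a)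
    by_cases hx : x = a
    · subst hx
      rw [count_cons_self, length_cons, show l.length + 1 - (l.count x + 1) = l.length - l.count x
        by omega, replicate_succ, map_cons, cons_append]
      exact ih.cons _
    · rw [count_cons_of_ne hx, length_cons, show l.length + 1 - l.count a =
        l.length - l.count a + 1 by omega, replicate_succ, map_cons, hf x hx]
      exact (ih.cons _).trans perm_middle.symm

theorem setOf_length_eq_and_eq_image_ofFn (n : ℕ) (P : List α → Prop) :
    {w : List α | w.length = n ∧ P w} = ofFn '' {v : Fin n → α | P (ofFn v)} := by
  ext w
  constructor
  · rintro ⟨rfl, hw⟩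
    exact ⟨fun i => w[(i : ℕ)], by simpa only [Set.mem_ofPred_eq, ofFn_getElem] using hw,
      ofFn_getElem⟩
  · rintro ⟨v, hv, rfl⟩
    exact ⟨length_ofFn, hv⟩

end List

theorem Fintype.sum_ofFn_succ {α M : Type*} [Fintype α] [AddCommMonoid M] {n : ℕ}
    (g : List α → M) :
    ∑ v : Fin (n + 1) → α, g (List.ofFn v) = ∑ a, ∑ v : Fin n → α, g (a :: List.ofFn v) := by
  rw [← (Fin.consEquiv fun _ => α).sum_comp, Fintype.sum_prod_type]
  simp [Fin.consEquiv]

section AboveSeries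

variable {α A : Type*} [CommRing A] (R : α → α → Prop) [DecidableRel R] (ω : α → A)

open Classical in
noncomputable def aboveWeight (u w : List α) : A :=
  if List.SublistForall₂ R u w then (w.map ω).prod else 0

theorem aboveWeight_cons_cons (a b : α) (u w : List α) :
    aboveWeight R ω (a :: u) (b :: w) =
      if R a b then ω b * aboveWeight R ω u w else ω b * aboveWeight R ω (a :: u) w := by
  by_cases hab : R a b
  · rw [if_pos hab, aboveWeight, aboveWeight,
      propext (List.sublistForall₂_cons_cons_iff_of_rel hab), List.map_cons, List.prod_cons, mul_ite,
      mul_zero]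
  · rw [if_neg hab, aboveWeight, aboveWeight,
      propext (List.sublistForall₂_cons_cons_iff_of_not_rel hab), List.map_cons, List.prod_cons,
      mul_ite, mul_zero]

variable [Fintype α]

noncomputable def aboveSeries (u : List α) : A⟦X⟧ :=
  PowerSeries.mk fun n => ∑ v : Fin n → α, aboveWeight R ω u (List.ofFn v)

def matchWeight (a : α) : A := ∑ b, if R a b then ω b else 0

def missWeight (a : α) : A := ∑ b, if R a b then 0 else ω b

def letterWeights (a : α) : A × A := (matchWeight R ω a, missWeight R ω a)

theorem coeff_succ_aboveSeries_cons (a : α) (u : List α) (n : ℕ) :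
    coeff (n + 1) (aboveSeries R ω (a :: u)) =
      matchWeight R ω a * coeff n (aboveSeries R ω u) +
        missWeight R ω a * coeff n (aboveSeries R ω (a :: u)) := by
  simp only [aboveSeries, coeff_mk, matchWeight, missWeight, Finset.sum_mul,
    ← Finset.sum_add_distrib]
  rw [Fintype.sum_ofFn_succ]
  refine Finset.sum_congr rfl fun b _ => ?_
  simp only [aboveWeight_cons_cons]
  split_ifs <;> simp [Finset.mul_sum]

theorem aboveSeries_cons (a : α) (u : List α) :
    aboveSeries R ω (a :: u) =
      X * (C (matchWeight R ω a) * aboveSeries R ω u +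
        C (missWeight R ω a) * aboveSeries R ω (a :: u)) := by
  ext (_ | n)
  · simp [aboveSeries, aboveWeight, List.sublistForall₂_nil_right_iff]
  · rw [coeff_succ_X_mul, map_add, coeff_C_mul, coeff_C_mul, coeff_succ_aboveSeries_cons]

theorem prod_mul_aboveSeries (u : List α) :
    (u.map fun a => 1 - X * C (missWeight R ω a)).prod * aboveSeries R ω u =
      (u.map fun a => X * C (matchWeight R ω a)).prod * aboveSeries R ω [] := by
  induction u with
  | nil => simp
  | cons a u ih =>
    simp only [List.map_cons, List.prod_cons]
    linear_combination (X * C (matchWeight R ω a)) * ih +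
      (u.map fun a => 1 - X * C (missWeight R ω a)).prod * aboveSeries_cons R ω a u

theorem aboveSeries_eq_of_perm {u u' : List α}
    (h : (u.map (letterWeights R ω)).Perm (u'.map (letterWeights R ω))) :
    aboveSeries R ω u = aboveSeries R ω u' := by
  have hmiss := (h.map fun p => 1 - X * C p.2).prod_eq
  have hmatch := (h.map fun p => X * C p.1).prod_eq
  simp only [List.map_map, Function.comp_def, letterWeights] at hmiss hmatch
  have hunit : IsUnit (u.map fun a => 1 - X * C (missWeight R ω a)).prod := by
    rw [isUnit_iff_constantCoeff, ← List.prod_hom _ (constantCoeff (R := A))]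
    simp [Function.comp_def]
  refine hunit.mul_left_cancel ?_
  rw [prod_mul_aboveSeries, hmatch, ← prod_mul_aboveSeries, hmiss]

end AboveSeries

section GeneralizedSubwordOrder

variable {s : ℕ}

def LetterLE (x y : Letter s) : Prop := x = y ∨ y = none

instance : DecidableRel (@LetterLE s) := fun x y => inferInstanceAs (Decidable (x = y ∨ y = none))

theorem wle_iff_sublistForall₂ (u w : List (Letter s)) :
    WLE u w ↔ List.SublistForall₂ LetterLE u w := by
  rw [List.sublistForall₂_iff]
  exact ⟨fun ⟨w', hs, hf⟩ => ⟨w', hf, hs⟩, fun ⟨w', hf, hs⟩ => ⟨w', hs, hf⟩⟩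

noncomputable def cMarker (x : Letter s) : Polynomial ℤ := if x = none then Polynomial.X else 1

theorem prod_map_cMarker (w : List (Letter s)) :
    (w.map cMarker).prod = Polynomial.X ^ w.count none := by
  rw [(w.map_perm_replicate_append_replicate none cMarker 1 fun _ hx => if_neg hx).prod_eq]
  simp [cMarker]

theorem letterWeights_eq (x : Letter s) :
    letterWeights LetterLE cMarker x =
      if x = none then (Polynomial.X, (s : Polynomial ℤ))
      else (Polynomial.X + 1, (s : Polynomial ℤ) - 1) := by
  rcases x with _ | i
  · simp [letterWeights, matchWeight, missWeight, LetterLE, cMarker, Fintype.sum_option]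
  · simp only [letterWeights, matchWeight, missWeight, LetterLE, cMarker, Fintype.sum_option]
    simp [Finset.sum_ite, Finset.filter_ne, Nat.cast_pred i.pos]

theorem map_letterWeights_perm (w : List (Letter s)) :
    (w.map (letterWeights LetterLE cMarker)).Perm
      (List.replicate (w.count none) (Polynomial.X, (s : Polynomial ℤ)) ++
        List.replicate (w.length - w.count none) (Polynomial.X + 1, (s : Polynomial ℤ) - 1)) := by
  simp only [funext letterWeights_eq]
  exact w.map_perm_replicate_append_replicate none _ _ fun _ hx => if_neg hx

end GeneralizedSubwordOrder

theorem ncard_eq_coeff_aboveSeries {s : ℕ} (u : List (Letter s)) (n q : ℕ) :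
    ({w : List (Letter s) | w.length = n ∧ w.count none = q ∧ WLE u w}.ncard : ℤ) =
      (coeff n (aboveSeries LetterLE cMarker u)).coeff q := by
  classical
  rw [List.setOf_length_eq_and_eq_image_ofFn n fun w => w.count none = q ∧ WLE u w,
    Set.ncard_image_of_injective _ List.ofFn_injective, Set.ncard_eq_toFinset_card',
    Set.toFinset_ofPred, Finset.card_filter, Nat.cast_sum]
  simp only [aboveSeries, coeff_mk, Polynomial.finsetSum_coeff]
  refine Finset.sum_congr rfl fun v _ => ?_
  rw [aboveWeight, apply_ite (Polynomial.coeff · q), prod_map_cMarker, Polynomial.coeff_X_pow,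
    Polynomial.coeff_zero, wle_iff_sublistForall₂]
  split_ifs <;> simp_all [eq_comm]

theorem count_above_well_defined_general (s : ℕ) (m p n q : ℕ)
    (u u' : List (Letter s)) (hu : u.length = m) (hu' : u'.length = m)
    (hcu : u.count (none : Letter s) = p) (hcu' : u'.count (none : Letter s) = p) :
    {w : List (Letter s) | w.length = n ∧ w.count (none : Letter s) = q ∧ WLE u w}.ncard =
      {w : List (Letter s) | w.length = n ∧ w.count (none : Letter s) = q ∧ WLE u' w}.ncard := by
  have hseries : aboveSeries LetterLE cMarker u = aboveSeries LetterLE cMarker u' := by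
    refine aboveSeries_eq_of_perm _ _ ((map_letterWeights_perm u).trans ?_)
    rw [hu, hcu, ← hu', ← hcu']
    exact (map_letterWeights_perm u').symm
  have hcount := ncard_eq_coeff_aboveSeries u n q
  rw [hseries, ← ncard_eq_coeff_aboveSeries u' n q] at hcount
  exact_mod_cast hcount

/-- The number of words of length `n` with exactly `q` letters `c` lying above a fixed
word of length `m` with exactly `p` letters `c` depends only on `(m, p, n, q)`. -/
theorem count_above_well_defined (s : ℕ) (hs : 1 ≤ s) (m p n q : ℕ)
    (hpm : p ≤ m) (hqn : q ≤ n)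
    (u u' : List (Letter s)) (hu : u.length = m) (hu' : u'.length = m)
    (hcu : u.count (none : Letter s) = p) (hcu' : u'.count (none : Letter s) = p) :
    {w : List (Letter s) | w.length = n ∧ w.count (none : Letter s) = q ∧ WLE u w}.ncard =
      {w : List (Letter s) | w.length = n ∧ w.count (none : Letter s) = q ∧ WLE u' w}.ncard :=
  count_above_well_defined_general s m p n q u u' hu hu' hcu hcu'
end

section
/- Fix s ≥ 1 and P_s = {a_1,…,a_s, c | a_i < c}, with μ the Möbius function of the generalized subword order P_s^*. Then μ(∅, c) = s − 1, μ(a_i, c) = −1 for each i, μ(c, cc) = 2s − 1, and μ(a_i, cc) = −2s + 1. -/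
lemma wle_nil {s : ℕ} (w : List (Letter s)) : WLE [] w :=
  ⟨[], List.nil_sublist w, List.Forall₂.nil⟩

lemma wle_nil_right {s : ℕ} (z : List (Letter s)) : WLE z [] ↔ z = [] := by
  constructor
  · rintro ⟨w', hsub, hf⟩
    rcases List.sublist_nil.mp hsub with rfl
    exact List.forall₂_nil_right_iff.mp hf
  · rintro rfl; exact wle_nil []

lemma wle_cons {s : ℕ} (z : List (Letter s)) (a : Letter s) (v : List (Letter s)) :
    WLE z (a :: v) ↔ WLE z v ∨ ∃ x t, z = x :: t ∧ (x = a ∨ a = none) ∧ WLE t v := by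
  constructor
  · rintro ⟨w', hsub, hf⟩
    rcases List.sublist_cons_iff.mp hsub with h | ⟨r, rfl, hr⟩
    · exact Or.inl ⟨w', h, hf⟩
    · rcases List.forall₂_cons_right_iff.mp hf with ⟨x, t, hxa, hf', rfl⟩
      exact Or.inr ⟨x, t, rfl, hxa, r, hr, hf'⟩
  · rintro (⟨w', hsub, hf⟩ | ⟨x, t, rfl, hxa, w', hsub, hf⟩)
    · exact ⟨w', hsub.cons a, hf⟩
    · exact ⟨a :: w', hsub.cons₂ a, List.Forall₂.cons hxa hf⟩

lemma wle_single {s : ℕ} (z : List (Letter s)) (a : Letter s) :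
    WLE z [a] ↔ z = [] ∨ ∃ x, z = [x] ∧ (x = a ∨ a = none) := by
  rw [wle_cons]
  simp only [wle_nil_right]
  constructor
  · rintro (rfl | ⟨x, t, rfl, hxa, rfl⟩)
    · exact Or.inl rfl
    · exact Or.inr ⟨x, rfl, hxa⟩
  · rintro (rfl | ⟨x, rfl, hxa⟩)
    · exact Or.inl rfl
    · exact Or.inr ⟨x, [], rfl, hxa, rfl⟩

lemma wle_pair {s : ℕ} (z : List (Letter s)) (a b : Letter s) :
    WLE z [a, b] ↔ z = [] ∨ (∃ x, z = [x] ∧ (x = b ∨ b = none)) ∨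
      (∃ x, z = [x] ∧ (x = a ∨ a = none)) ∨
      (∃ x y, z = [x, y] ∧ (x = a ∨ a = none) ∧ (y = b ∨ b = none)) := by
  rw [wle_cons]
  simp only [wle_single]
  constructor
  · rintro (h | ⟨x, t, rfl, hxa, (rfl | ⟨y, rfl, hyb⟩)⟩)
    · rcases h with rfl | ⟨x, rfl, hxb⟩
      · exact Or.inl rfl
      · exact Or.inr (Or.inl ⟨x, rfl, hxb⟩)
    · exact Or.inr (Or.inr (Or.inl ⟨x, rfl, hxa⟩))
    · exact Or.inr (Or.inr (Or.inr ⟨x, y, rfl, hxa, hyb⟩))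
  · rintro (rfl | ⟨x, rfl, hxb⟩ | ⟨x, rfl, hxa⟩ | ⟨x, y, rfl, hxa, hyb⟩)
    · exact Or.inl (Or.inl rfl)
    · exact Or.inl (Or.inr ⟨x, rfl, hxb⟩)
    · exact Or.inr ⟨x, [], rfl, hxa, Or.inl rfl⟩
    · exact Or.inr ⟨x, [y], rfl, hxa, Or.inr ⟨y, rfl, hyb⟩⟩

/-- Small values of the Möbius function of `P_s^*`:
`μ(∅,c) = s−1`, `μ(a_i,c) = −1`, `μ(c,c²) = 2s−1`, `μ(a_i,c²) = −2s+1`. -/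
theorem mu_small_values (s : ℕ) (hs : 1 ≤ s)
    (μ : List (Letter s) → List (Letter s) → ℤ)
    (hrefl : ∀ u, μ u u = 1)
    (hnle : ∀ u v, ¬ WLE u v → μ u v = 0)
    (hsum : ∀ u v, WLE u v → u ≠ v → ∑ᶠ z ∈ {z : List (Letter s) | WLE u z ∧ WLE z v}, μ u z = 0) :
    μ [] [none] = (s : ℤ) - 1 ∧
    (∀ i : Fin s, μ [some i] [none] = -1) ∧
    μ [none] [none, none] = 2 * (s : ℤ) - 1 ∧
    (∀ i : Fin s, μ [some i] [none, none] = -(2 * (s : ℤ)) + 1) := by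
  classical
  have key : ∀ (u v : List (Letter s)) (S : Finset (List (Letter s))),
      WLE u v → u ≠ v → (∀ z, WLE z v ↔ z ∈ S) →
      ∑ z ∈ S, μ u z = 0 := by
    intro u v S hle hne hS
    have h2 := hsum u v hle hne
    have h1 : {z : List (Letter s) | WLE u z ∧ WLE z v}
        = ↑(S.filter (fun z => WLE u z)) := by
      ext z
      simp only [Set.mem_setOf_eq, Finset.coe_filter, hS z]
      tauto
    rw [h1, finsum_mem_coe_finset] at h2
    rw [← h2, Finset.sum_filter]
    refine Finset.sum_congr rfl fun z _ => ?_
    split_ifs with h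
    · rfl
    · exact hnle u z h
  -- A : μ [] [some i] = -1
  have A : ∀ i : Fin s, μ [] [some i] = -1 := by
    intro i
    have h := key [] [some i] {[], [some i]} (wle_nil _) (by simp)
      (by intro z; simp [wle_single])
    rw [Finset.sum_insert (by simp), Finset.sum_singleton, hrefl] at h
    linarith
  -- Sone : set of words ≤ [none]
  have hSone : ∀ z : List (Letter s),
      WLE z [none] ↔ z ∈ insert ([] : List (Letter s)) (Finset.univ.image fun x : Letter s => [x]) := by
    intro z
    simp [wle_single, eq_comm]
  have hinj1 : ∀ x ∈ (Finset.univ : Finset (Letter s)), ∀ y ∈ Finset.univ,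
      ([x] : List (Letter s)) = [y] → x = y := by simp
  -- B : μ [] [none] = s - 1
  have B : μ [] [none] = (s : ℤ) - 1 := by
    have h := key [] [none] _ (wle_nil _) (by simp) hSone
    rw [Finset.sum_insert (by simp), Finset.sum_image hinj1, hrefl,
      Fintype.sum_option] at h
    have hA : ∑ i : Fin s, μ [] [some i] = -(s : ℤ) := by
      rw [Finset.sum_congr rfl (fun i _ => A i)]
      simp
    rw [hA] at h
    linarith
  -- C : μ [some i] [none] = -1
  have hsj : ∀ i j : Fin s, μ [some i] [some j] = if j = i then 1 else 0 := by
    intro i j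
    by_cases h : j = i
    · subst h; simp [hrefl]
    · rw [if_neg h]
      refine hnle _ _ ?_
      simp only [wle_single]
      push_neg
      simp
      exact fun hh => h hh.symm
  have C : ∀ i : Fin s, μ [some i] [none] = -1 := by
    intro i
    have h := key [some i] [none] _ (by simp [wle_single]) (by simp) hSone
    rw [Finset.sum_insert (by simp), Finset.sum_image hinj1,
      hnle _ _ (by simp [wle_nil_right]), Fintype.sum_option] at h
    have h1 : ∑ j : Fin s, μ [some i] [some j] = 1 := by
      rw [Finset.sum_congr rfl (fun j _ => hsj i j)]
      simp
    rw [h1] at h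
    linarith
  -- Finsets of words below two-letter words
  have hinj2L : ∀ a : Letter s, ∀ x ∈ (Finset.univ : Finset (Letter s)), ∀ y ∈ Finset.univ,
      ([a, x] : List (Letter s)) = [a, y] → x = y := by simp
  have hinj2R : ∀ a : Letter s, ∀ x ∈ (Finset.univ : Finset (Letter s)), ∀ y ∈ Finset.univ,
      ([x, a] : List (Letter s)) = [y, a] → x = y := by simp
  have hS_sn : ∀ i : Fin s, ∀ z : List (Letter s), WLE z [some i, none] ↔
      z ∈ insert ([] : List (Letter s))
        ((Finset.univ.image fun x : Letter s => [x]) ∪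
         (Finset.univ.image fun x : Letter s => [some i, x])) := by
    intro i z
    simp only [wle_pair, Finset.mem_insert, Finset.mem_union, Finset.mem_image,
      Finset.mem_univ, true_and]
    constructor
    · rintro (rfl | ⟨x, rfl, _⟩ | ⟨x, rfl, _⟩ | ⟨x, y, rfl, hx, _⟩)
      · exact Or.inl rfl
      · exact Or.inr (Or.inl ⟨x, rfl⟩)
      · exact Or.inr (Or.inl ⟨x, rfl⟩)
      · rcases hx with rfl | h
        · exact Or.inr (Or.inr ⟨y, rfl⟩)
        · cases h
    · rintro (rfl | ⟨x, rfl⟩ | ⟨y, rfl⟩)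
      · exact Or.inl rfl
      · exact Or.inr (Or.inl ⟨x, rfl, Or.inr trivial⟩)
      · exact Or.inr (Or.inr (Or.inr ⟨some i, y, rfl, Or.inl rfl, Or.inr trivial⟩))
  have hS_ns : ∀ i : Fin s, ∀ z : List (Letter s), WLE z [none, some i] ↔
      z ∈ insert ([] : List (Letter s))
        ((Finset.univ.image fun x : Letter s => [x]) ∪
         (Finset.univ.image fun x : Letter s => [x, some i])) := by
    intro i z
    simp only [wle_pair, Finset.mem_insert, Finset.mem_union, Finset.mem_image,
      Finset.mem_univ, true_and]
    constructor
    · rintro (rfl | ⟨x, rfl, _⟩ | ⟨x, rfl, _⟩ | ⟨x, y, rfl, _, hy⟩)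
      · exact Or.inl rfl
      · exact Or.inr (Or.inl ⟨x, rfl⟩)
      · exact Or.inr (Or.inl ⟨x, rfl⟩)
      · rcases hy with rfl | h
        · exact Or.inr (Or.inr ⟨x, rfl⟩)
        · cases h
    · rintro (rfl | ⟨x, rfl⟩ | ⟨x, rfl⟩)
      · exact Or.inl rfl
      · exact Or.inr (Or.inr (Or.inl ⟨x, rfl, Or.inr trivial⟩))
      · exact Or.inr (Or.inr (Or.inr ⟨x, some i, rfl, Or.inr trivial, Or.inl rfl⟩))
  have hS_nn : ∀ z : List (Letter s), WLE z [none, none] ↔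
      z ∈ insert ([] : List (Letter s))
        ((Finset.univ.image fun x : Letter s => [x]) ∪
         (Finset.univ.image fun p : Letter s × Letter s => [p.1, p.2])) := by
    intro z
    simp only [wle_pair, Finset.mem_insert, Finset.mem_union, Finset.mem_image,
      Finset.mem_univ, true_and]
    constructor
    · rintro (rfl | ⟨x, rfl, _⟩ | ⟨x, rfl, _⟩ | ⟨x, y, rfl, _, _⟩)
      · exact Or.inl rfl
      · exact Or.inr (Or.inl ⟨x, rfl⟩)
      · exact Or.inr (Or.inl ⟨x, rfl⟩)
      · exact Or.inr (Or.inr ⟨(x, y), rfl⟩)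
    · rintro (rfl | ⟨x, rfl⟩ | ⟨⟨x, y⟩, rfl⟩)
      · exact Or.inl rfl
      · exact Or.inr (Or.inl ⟨x, rfl, Or.inr trivial⟩)
      · exact Or.inr (Or.inr (Or.inr ⟨x, y, rfl, Or.inr trivial, Or.inr trivial⟩))
  -- disjointness lemmas
  have hd1 : ∀ i : Fin s, Disjoint (Finset.univ.image fun x : Letter s => ([x] : List (Letter s)))
      (Finset.univ.image fun x : Letter s => [some i, x]) := by
    intro i
    rw [Finset.disjoint_left]
    rintro a ha hb
    simp only [Finset.mem_image, Finset.mem_univ, true_and] at ha hb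
    rcases ha with ⟨x, rfl⟩
    rcases hb with ⟨y, h⟩
    simp at h
  have hd2 : ∀ i : Fin s, Disjoint (Finset.univ.image fun x : Letter s => ([x] : List (Letter s)))
      (Finset.univ.image fun x : Letter s => [x, some i]) := by
    intro i
    rw [Finset.disjoint_left]
    rintro a ha hb
    simp only [Finset.mem_image, Finset.mem_univ, true_and] at ha hb
    rcases ha with ⟨x, rfl⟩
    rcases hb with ⟨y, h⟩
    simp at h
  have hd3 : Disjoint (Finset.univ.image fun x : Letter s => ([x] : List (Letter s)))
      (Finset.univ.image fun p : Letter s × Letter s => [p.1, p.2]) := by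
    rw [Finset.disjoint_left]
    rintro a ha hb
    simp only [Finset.mem_image, Finset.mem_univ, true_and] at ha hb
    rcases ha with ⟨x, rfl⟩
    rcases hb with ⟨p, h⟩
    simp at h
  -- μ [some i] on two-letter words of letters some j
  have Dleft : ∀ i j : Fin s, μ [some i] [some i, some j] = -1 := by
    intro i j
    by_cases hij : j = i
    · subst hij
      have h := key [some j] [some j, some j] {[], [some j], [some j, some j]}
        (by rw [wle_pair]; exact Or.inr (Or.inr (Or.inl ⟨some j, rfl, Or.inl rfl⟩)))
        (by simp)
        (by intro z; rw [wle_pair]; simp; (try tauto))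
      rw [Finset.sum_insert (by simp), Finset.sum_insert (by simp), Finset.sum_singleton,
        hnle _ _ (by simp [wle_nil_right]), hrefl] at h
      linarith
    · have h := key [some i] [some i, some j] {[], [some i], [some j], [some i, some j]}
        (by rw [wle_pair]; exact Or.inr (Or.inr (Or.inl ⟨some i, rfl, Or.inl rfl⟩)))
        (by simp)
        (by intro z; rw [wle_pair]; simp; (try tauto))
      have hne2 : (some i : Letter s) ≠ some j := by
        simp; exact fun hh => hij hh.symm
      rw [Finset.sum_insert (by simp), Finset.sum_insert (by simp [hne2]),
        Finset.sum_insert (by simp [hne2.symm]), Finset.sum_singleton,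
        hnle _ _ (by simp [wle_nil_right]), hrefl,
        hnle _ _ (by simp [wle_single]; exact fun hh => hij hh.symm)] at h
      linarith
  have Dright : ∀ i j : Fin s, μ [some i] [some j, some i] = -1 := by
    intro i j
    by_cases hij : j = i
    · subst hij; exact Dleft j j
    · have h := key [some i] [some j, some i] {[], [some i], [some j], [some j, some i]}
        (by rw [wle_pair]; exact Or.inr (Or.inl ⟨some i, rfl, Or.inl rfl⟩))
        (by simp)
        (by intro z; rw [wle_pair]; simp; (try tauto))
      have hne2 : (some i : Letter s) ≠ some j := by
        simp; exact fun hh => hij hh.symm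
      rw [Finset.sum_insert (by simp), Finset.sum_insert (by simp [hne2]),
        Finset.sum_insert (by simp [hne2.symm]), Finset.sum_singleton,
        hnle _ _ (by simp [wle_nil_right]), hrefl,
        hnle _ _ (by simp [wle_single]; exact fun hh => hij hh.symm)] at h
      linarith
  -- helper sums and non-relations
  have hsum_sj : ∀ i : Fin s, ∑ j : Fin s, μ [some i] [some j] = 1 := by
    intro i
    rw [Finset.sum_congr rfl (fun j _ => hsj i j)]
    simp
  have hsum_Dleft : ∀ i : Fin s, ∑ j : Fin s, μ [some i] [some i, some j] = -(s : ℤ) := by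
    intro i
    rw [Finset.sum_congr rfl (fun j _ => Dleft i j)]
    simp
  have hsum_Dright : ∀ i : Fin s, ∑ j : Fin s, μ [some i] [some j, some i] = -(s : ℤ) := by
    intro i
    rw [Finset.sum_congr rfl (fun j _ => Dright i j)]
    simp
  have nWn_s : ∀ j : Fin s, ¬ WLE [(none : Letter s)] [some j] := by
    intro j h
    rw [wle_single] at h
    rcases h with h | ⟨x, hx, hx2⟩
    · exact List.cons_ne_nil _ _ h
    · simp at hx
      subst hx
      simp at hx2
  have nWn_ss : ∀ j k : Fin s, ¬ WLE [(none : Letter s)] [some j, some k] := by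
    intro j k h
    rw [wle_pair] at h
    rcases h with h | ⟨x, hx, hx2⟩ | ⟨x, hx, hx2⟩ | ⟨x, y, hxy, _, _⟩
    · exact List.cons_ne_nil _ _ h
    · simp at hx; subst hx; simp at hx2
    · simp at hx; subst hx; simp at hx2
    · simp at hxy
  have nWs_ss : ∀ i j k : Fin s, j ≠ i → k ≠ i → ¬ WLE [some i] [some j, some k] := by
    intro i j k hj hk h
    rw [wle_pair] at h
    rcases h with h | ⟨x, hx, hx2⟩ | ⟨x, hx, hx2⟩ | ⟨x, y, hxy, _, _⟩
    · exact List.cons_ne_nil _ _ h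
    · simp at hx; subst hx
      rcases hx2 with h2 | h2
      · simp at h2; exact hk h2.symm
      · simp at h2
    · simp at hx; subst hx
      rcases hx2 with h2 | h2
      · simp at h2; exact hj h2.symm
      · simp at h2
    · simp at hxy
  have hsum_n_s : ∑ k : Fin s, μ [(none : Letter s)] [some k] = 0 := by
    rw [Finset.sum_congr rfl (fun k _ => hnle _ _ (nWn_s k))]
    simp
  have hsingles_n : ∑ x : Letter s, μ [(none : Letter s)] [x] = 1 := by
    rw [Fintype.sum_option, hrefl, hsum_n_s]
    ring
  have hsingles_s : ∀ i : Fin s, ∑ x : Letter s, μ [some i] [x] = 0 := by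
    intro i
    rw [Fintype.sum_option, C i, hsum_sj i]
    ring
  -- E : μ [some i] [some i, none] = s  and  μ [some i] [none, some i] = s
  have Esn : ∀ i : Fin s, μ [some i] [some i, none] = (s : ℤ) := by
    intro i
    have h := key [some i] [some i, none] _
      (by rw [wle_pair]; exact Or.inr (Or.inr (Or.inl ⟨some i, rfl, Or.inl rfl⟩)))
      (by simp) (hS_sn i)
    rw [Finset.sum_insert (by simp), Finset.sum_union (hd1 i), Finset.sum_image hinj1,
      Finset.sum_image (hinj2L (some i)), hnle _ _ (by simp [wle_nil_right]),
      hsingles_s i, Fintype.sum_option, hsum_Dleft i] at h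
    linarith
  have Ens : ∀ i : Fin s, μ [some i] [none, some i] = (s : ℤ) := by
    intro i
    have h := key [some i] [none, some i] _
      (by rw [wle_pair]; exact Or.inr (Or.inl ⟨some i, rfl, Or.inl rfl⟩))
      (by simp) (hS_ns i)
    rw [Finset.sum_insert (by simp), Finset.sum_union (hd2 i), Finset.sum_image hinj1,
      Finset.sum_image (hinj2R (some i)), hnle _ _ (by simp [wle_nil_right]),
      hsingles_s i, Fintype.sum_option, hsum_Dright i] at h
    linarith
  -- F : j ≠ i cases, value 1
  have Fsn : ∀ i j : Fin s, j ≠ i → μ [some i] [some j, none] = 1 := by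
    intro i j hij
    have h := key [some i] [some j, none] _
      (by rw [wle_pair]; exact Or.inr (Or.inl ⟨some i, rfl, Or.inr rfl⟩))
      (by simp) (hS_sn j)
    have hk : ∑ k : Fin s, μ [some i] [some j, some k] = -1 := by
      have e : ∀ k : Fin s, μ [some i] [some j, some k] = if k = i then -1 else 0 := by
        intro k
        by_cases hk : k = i
        · subst hk; rw [if_pos rfl]; exact Dright k j
        · rw [if_neg hk]; exact hnle _ _ (nWs_ss i j k hij hk)
      rw [Finset.sum_congr rfl (fun k _ => e k)]
      simp
    rw [Finset.sum_insert (by simp), Finset.sum_union (hd1 j), Finset.sum_image hinj1,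
      Finset.sum_image (hinj2L (some j)), hnle _ _ (by simp [wle_nil_right]),
      hsingles_s i, Fintype.sum_option, hk] at h
    linarith
  have Fns : ∀ i j : Fin s, j ≠ i → μ [some i] [none, some j] = 1 := by
    intro i j hij
    have h := key [some i] [none, some j] _
      (by rw [wle_pair]; exact Or.inr (Or.inr (Or.inl ⟨some i, rfl, Or.inr rfl⟩)))
      (by simp) (hS_ns j)
    have hk : ∑ k : Fin s, μ [some i] [some k, some j] = -1 := by
      have e : ∀ k : Fin s, μ [some i] [some k, some j] = if k = i then -1 else 0 := by
        intro k
        by_cases hk : k = i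
        · subst hk; rw [if_pos rfl]; exact Dleft k j
        · rw [if_neg hk]; exact hnle _ _ (nWs_ss i k j hk hij)
      rw [Finset.sum_congr rfl (fun k _ => e k)]
      simp
    rw [Finset.sum_insert (by simp), Finset.sum_union (hd2 j), Finset.sum_image hinj1,
      Finset.sum_image (hinj2R (some j)), hnle _ _ (by simp [wle_nil_right]),
      hsingles_s i, Fintype.sum_option, hk] at h
    linarith
  -- G : μ [none] on mixed pairs
  have Gsn : ∀ j : Fin s, μ [(none : Letter s)] [some j, none] = -1 := by
    intro j
    have h := key [none] [some j, none] _
      (by rw [wle_pair]; exact Or.inr (Or.inl ⟨none, rfl, Or.inr rfl⟩))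
      (by simp) (hS_sn j)
    have hk : ∑ k : Fin s, μ [(none : Letter s)] [some j, some k] = 0 := by
      rw [Finset.sum_congr rfl (fun k _ => hnle _ _ (nWn_ss j k))]
      simp
    rw [Finset.sum_insert (by simp), Finset.sum_union (hd1 j), Finset.sum_image hinj1,
      Finset.sum_image (hinj2L (some j)), hnle _ _ (by simp [wle_nil_right]),
      hsingles_n, Fintype.sum_option, hk] at h
    linarith
  have Gns : ∀ j : Fin s, μ [(none : Letter s)] [none, some j] = -1 := by
    intro j
    have h := key [none] [none, some j] _
      (by rw [wle_pair]; exact Or.inr (Or.inr (Or.inl ⟨none, rfl, Or.inr rfl⟩)))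
      (by simp) (hS_ns j)
    have hk : ∑ k : Fin s, μ [(none : Letter s)] [some k, some j] = 0 := by
      rw [Finset.sum_congr rfl (fun k _ => hnle _ _ (nWn_ss k j))]
      simp
    rw [Finset.sum_insert (by simp), Finset.sum_union (hd2 j), Finset.sum_image hinj1,
      Finset.sum_image (hinj2R (some j)), hnle _ _ (by simp [wle_nil_right]),
      hsingles_n, Fintype.sum_option, hk] at h
    linarith
  -- pair injectivity
  have hinjP : ∀ p ∈ (Finset.univ : Finset (Letter s × Letter s)), ∀ q ∈ Finset.univ,
      ([p.1, p.2] : List (Letter s)) = [q.1, q.2] → p = q := by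
    intro p _ q _ h
    simp at h
    exact Prod.ext h.1 h.2
  -- Goal 3 : μ [none] [none, none] = 2s - 1
  have G3 : μ [(none : Letter s)] [none, none] = 2 * (s : ℤ) - 1 := by
    have h := key [none] [none, none] _
      (by rw [wle_pair]; exact Or.inr (Or.inl ⟨none, rfl, Or.inr rfl⟩))
      (by simp) hS_nn
    have hP : ∑ p : Letter s × Letter s, μ [(none : Letter s)] [p.1, p.2]
        = μ [(none : Letter s)] [none, none] + -(s : ℤ) + -(s : ℤ) := by
      rw [Fintype.sum_prod_type, Fintype.sum_option]
      have inner_n : ∑ y : Letter s, μ [(none : Letter s)] [none, y]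
          = μ [(none : Letter s)] [none, none] + -(s : ℤ) := by
        rw [Fintype.sum_option, Finset.sum_congr rfl (fun k _ => Gns k)]
        simp
      have inner_s : ∀ j : Fin s, ∑ y : Letter s, μ [(none : Letter s)] [some j, y] = -1 := by
        intro j
        rw [Fintype.sum_option, Gsn j,
          Finset.sum_congr rfl (fun k _ => hnle _ _ (nWn_ss j k))]
        simp
      rw [inner_n, Finset.sum_congr rfl (fun j _ => inner_s j)]
      simp
    rw [Finset.sum_insert (by simp), Finset.sum_union hd3, Finset.sum_image hinj1,
      Finset.sum_image hinjP, hnle _ _ (by simp [wle_nil_right]),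
      hsingles_n, hP] at h
    linarith
  -- Goal 4 : μ [some i] [none, none] = -(2s) + 1
  have G4 : ∀ i : Fin s, μ [some i] [none, none] = -(2 * (s : ℤ)) + 1 := by
    intro i
    have h := key [some i] [none, none] _
      (by rw [wle_pair]; exact Or.inr (Or.inl ⟨some i, rfl, Or.inr rfl⟩))
      (by simp) hS_nn
    have hP : ∑ p : Letter s × Letter s, μ [some i] [p.1, p.2]
        = μ [some i] [none, none] + (2 * (s : ℤ) - 1) := by
      rw [Fintype.sum_prod_type, Fintype.sum_option]
      have inner_n : ∑ y : Letter s, μ [some i] [none, y]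
          = μ [some i] [none, none] + (2 * (s : ℤ) - 1) := by
        have e : ∀ k : Fin s, μ [some i] [none, some k] = if k = i then (s : ℤ) else 1 := by
          intro k
          by_cases hk : k = i
          · subst hk; rw [if_pos rfl]; exact Ens k
          · rw [if_neg hk]; exact Fns i k hk
        have e2 : ∑ k : Fin s, μ [some i] [none, some k] = 2 * (s : ℤ) - 1 := by
          rw [Finset.sum_congr rfl (fun k _ => e k),
            Finset.sum_congr rfl (fun k (_ : k ∈ Finset.univ) =>
              show (if k = i then (s : ℤ) else 1) = (if k = i then (s : ℤ) - 1 else 0) + 1 by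
                split_ifs <;> ring),
            Finset.sum_add_distrib]
          simp
          ring
        rw [Fintype.sum_option, e2]
      have inner_s : ∀ j : Fin s, ∑ y : Letter s, μ [some i] [some j, y] = 0 := by
        intro j
        by_cases hj : j = i
        · subst hj
          rw [Fintype.sum_option, Esn j, hsum_Dleft j]
          ring
        · have hk : ∑ k : Fin s, μ [some i] [some j, some k] = -1 := by
            have e : ∀ k : Fin s, μ [some i] [some j, some k] = if k = i then -1 else 0 := by
              intro k
              by_cases hk : k = i
              · subst hk; rw [if_pos rfl]; exact Dright k j
              · rw [if_neg hk]; exact hnle _ _ (nWs_ss i j k hj hk)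
            rw [Finset.sum_congr rfl (fun k _ => e k)]
            simp
          rw [Fintype.sum_option, Fsn i j hj, hk]
          ring
      rw [inner_n, Finset.sum_congr rfl (fun j _ => inner_s j)]
      simp
    rw [Finset.sum_insert (by simp), Finset.sum_union hd3, Finset.sum_image hinj1,
      Finset.sum_image hinjP, hnle _ _ (by simp [wle_nil_right]),
      hsingles_s i, hP] at h
    linarith
  exact ⟨B, C, G3, G4⟩
end
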